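/- Let μ = (5 + √21)/2. Let x be an irrational real number not belonging to NICF_5*, with NICF iterates x_0 = x and x_{i+1} = 1/(x_i − ⌊x_i⌉). Then x < 0, or x > 1, or there exists n ≥ 1 such that |x_n| > μ. -/

import Mathlib

open Filter Pointwise

/-- NICF iterates: `x₀ = x`, `x_{i+1} = 1/(x_i - ⌊x_i⌉)`, with `⌊t⌉ = round t = ⌊t + 1/2⌋`. -/
noncomputable def nicfX (x : ℝ) : ℕ → ℝ
  | 0 => x
  | n + 1 => 1 / (nicfX x n - round (nicfX x n))

/-- The `i`-th NICF digit of `x`. -/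
noncomputable def nicfDigit (x : ℝ) (i : ℕ) : ℤ := round (nicfX x i)

/-- The `i`-th NICF digit is genuinely defined: the algorithm has not terminated before
step `i` (i.e. `x_m ≠ a_m` for all `m < i`). -/
def nicfDefined (x : ℝ) (i : ℕ) : Prop :=
  ∀ m, m < i → nicfX x m ≠ (nicfDigit x m : ℝ)

/-- `NICFset r`: the reals all of whose NICF digits `a_i` with `i ≥ 1` satisfy `|a_i| ≤ r`. -/
def NICFset (r : ℤ) : Set ℝ :=
  {x | ∀ i : ℕ, 1 ≤ i → nicfDefined x i → |nicfDigit x i| ≤ r}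

/-- `μ = (5 + √21)/2`. -/
noncomputable def nicfMu : ℝ := (5 + Real.sqrt 21) / 2

/-- `NICF₅*`: the subset of `[0,1]` whose NICF digits obey the `NICF₅*` rules. -/
noncomputable def NICF5star : Set ℝ :=
  {x | x ∈ Set.Icc (0 : ℝ) 1 ∧
    (nicfDigit x 0 = 0 ∨ nicfDigit x 0 = 1) ∧
    (nicfDigit x 0 = 0 → nicfDefined x 1 → nicfDigit x 1 ∈ ({2, 3, 4, 5} : Set ℤ)) ∧
    (nicfDigit x 0 = 1 → nicfDefined x 1 → nicfDigit x 1 ∈ ({-2, -3, -4, -5} : Set ℤ)) ∧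
    (∀ i : ℕ, 1 ≤ i → nicfDefined x i →
      nicfDigit x i ∈ ({-5, -4, -3, -2, 2, 3, 4, 5} : Set ℤ) ∧
      (nicfDigit x i = 2 → nicfDefined x (i + 1) →
        nicfDigit x (i + 1) ∈ ({2, 3, 4, 5} : Set ℤ)) ∧
      (nicfDigit x i = -2 → nicfDefined x (i + 1) →
        nicfDigit x (i + 1) ∈ ({-2, -3, -4, -5} : Set ℤ)) ∧
      (nicfDigit x i = 5 → nicfDefined x (i + 1) →
        nicfDigit x (i + 1) ∈ ({-2, -3, -4, -5} : Set ℤ)) ∧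
      (nicfDigit x i = -5 → nicfDefined x (i + 1) →
        nicfDigit x (i + 1) ∈ ({2, 3, 4, 5} : Set ℤ)))}

/-! Since `x` is irrational, no iterate is a half-integer or an integer, so `0 < |x_n - a_n| < 1/2`
and `x_{n+1} = 1/(x_n - a_n)` satisfies `|x_{n+1}| > 2` with the sign of `x_n - a_n`. If also
`|x_{n+1}| ≤ μ < 5`, the digit `a_{n+1}` lies in `{2,…,5}` or `{-5,…,-2}` according to that sign,
and each NICF₅* transition rule is a sign condition that is automatic: `a_i = 2` forces `x_i > 2`,
`a_i = 5` forces `x_i < 5`, and symmetrically for `-2, -5`. -/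

theorem nicfX_succ (x : ℝ) (n : ℕ) : nicfX x (n + 1) = (nicfX x n - nicfDigit x n)⁻¹ :=
  one_div _

theorem irrational_nicfX {x : ℝ} (hx : Irrational x) : ∀ n, Irrational (nicfX x n)
  | 0 => hx
  | n + 1 => by
    rw [nicfX_succ]
    exact ((irrational_nicfX hx n).sub_intCast _).inv

theorem Irrational.abs_sub_round_lt {y : ℝ} (hy : Irrational y) : |y - round y| < 1 / 2 := by
  refine (abs_sub_round y).lt_of_ne fun h => ?_
  rcases abs_eq (by norm_num : (0 : ℝ) ≤ 1 / 2) |>.mp h with h | h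
  · exact hy.ne_rat (round y + 1 / 2) (by push_cast; linarith)
  · exact hy.ne_rat (round y - 1 / 2) (by push_cast; linarith)

theorem abs_nicfX_sub_nicfDigit_lt {x : ℝ} (hx : Irrational x) (n : ℕ) :
    |nicfX x n - nicfDigit x n| < 1 / 2 :=
  (irrational_nicfX hx n).abs_sub_round_lt

theorem two_lt_nicfX_succ {x : ℝ} (hx : Irrational x) (n : ℕ)
    (h : (nicfDigit x n : ℝ) < nicfX x n) : 2 < nicfX x (n + 1) := by
  have hhalf : nicfX x n - nicfDigit x n < 2⁻¹ := by
    linarith [(abs_lt.mp (abs_nicfX_sub_nicfDigit_lt hx n)).2]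
  rwa [nicfX_succ, lt_inv_comm₀ two_pos (sub_pos.mpr h)]

theorem nicfX_succ_lt_neg_two {x : ℝ} (hx : Irrational x) (n : ℕ)
    (h : nicfX x n < nicfDigit x n) : nicfX x (n + 1) < -2 := by
  have hhalf : (-2)⁻¹ < nicfX x n - nicfDigit x n := by
    linarith [(abs_lt.mp (abs_nicfX_sub_nicfDigit_lt hx n)).1]
  rwa [nicfX_succ, inv_lt_of_neg (sub_neg.mpr h) (by norm_num)]

theorem two_lt_nicfX_succ_or_nicfX_succ_lt_neg_two {x : ℝ} (hx : Irrational x) (n : ℕ) :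
    2 < nicfX x (n + 1) ∨ nicfX x (n + 1) < -2 :=
  ((irrational_nicfX hx n).ne_int (nicfDigit x n)).lt_or_gt.elim
    (fun h => .inr (nicfX_succ_lt_neg_two hx n h)) (fun h => .inl (two_lt_nicfX_succ hx n h))

theorem round_mem_of_two_lt_of_lt_five {z : ℝ} (h2 : 2 < z) (h5 : z < 5) :
    round z ∈ ({2, 3, 4, 5} : Set ℤ) := by
  have hb := abs_le.mp (abs_sub_round z)
  have hlo : (1 : ℝ) < round z := by linarith
  have hhi : (round z : ℝ) < 6 := by linarith
  norm_cast at hlo hhi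
  simp only [Set.mem_insert_iff, Set.mem_singleton_iff]
  omega

theorem round_mem_of_neg_five_lt_of_lt_neg_two {z : ℝ} (h5 : -5 < z) (h2 : z < -2) :
    round z ∈ ({-2, -3, -4, -5} : Set ℤ) := by
  have hb := abs_le.mp (abs_sub_round z)
  have hlo : (-6 : ℝ) < round z := by linarith
  have hhi : (round z : ℝ) < -1 := by linarith
  norm_cast at hlo hhi
  simp only [Set.mem_insert_iff, Set.mem_singleton_iff]
  omega

theorem round_eq_zero_or_one_of_mem_Icc {z : ℝ} (hz : z ∈ Set.Icc (0 : ℝ) 1) :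
    round z = 0 ∨ round z = 1 := by
  have hb := abs_le.mp (abs_sub_round z)
  have hlo : (-1 : ℝ) < round z := by linarith [hz.1]
  have hhi : (round z : ℝ) < 2 := by linarith [hz.2]
  norm_cast at hlo hhi
  omega

theorem nicfMu_lt_five : nicfMu < 5 := by
  have : Real.sqrt 21 < 5 := by
    rw [Real.sqrt_lt' (by norm_num)]
    norm_num
  unfold nicfMu
  linarith

theorem mem_NICF5star_of_abs_nicfX_succ_lt_five {x : ℝ} (hx : Irrational x)
    (hx01 : x ∈ Set.Icc (0 : ℝ) 1) (h5 : ∀ n, |nicfX x (n + 1)| < 5) : x ∈ NICF5star := by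
  have pos : ∀ n, (nicfDigit x n : ℝ) < nicfX x n →
      nicfDigit x (n + 1) ∈ ({2, 3, 4, 5} : Set ℤ) := fun n h =>
    round_mem_of_two_lt_of_lt_five (two_lt_nicfX_succ hx n h) (abs_lt.mp (h5 n)).2
  have neg : ∀ n, nicfX x n < nicfDigit x n →
      nicfDigit x (n + 1) ∈ ({-2, -3, -4, -5} : Set ℤ) := fun n h =>
    round_mem_of_neg_five_lt_of_lt_neg_two (abs_lt.mp (h5 n)).1 (nicfX_succ_lt_neg_two hx n h)
  have hx0 : x ≠ 0 := by exact_mod_cast hx.ne_int 0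
  have hx1 : x ≠ 1 := by exact_mod_cast hx.ne_int 1
  refine ⟨hx01, round_eq_zero_or_one_of_mem_Icc hx01, fun ha _ => pos 0 ?_,
    fun ha _ => neg 0 ?_, ?_⟩
  · simpa [ha, nicfX] using lt_of_le_of_ne hx01.1 hx0.symm
  · simpa [ha, nicfX] using lt_of_le_of_ne hx01.2 hx1
  rintro (_ | i) hi -
  · omega
  have hsign := two_lt_nicfX_succ_or_nicfX_succ_lt_neg_two hx i
  have hnear := abs_lt.mp (abs_nicfX_sub_nicfDigit_lt hx (i + 1))
  have h5i := abs_lt.mp (h5 i)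
  refine ⟨?_, fun ha _ => pos _ ?_, fun ha _ => neg _ ?_, fun ha _ => neg _ ?_,
    fun ha _ => pos _ ?_⟩
  · rcases hsign with h | h
    · have : nicfDigit x (i + 1) ∈ _ := round_mem_of_two_lt_of_lt_five h h5i.2
      simp only [Set.mem_insert_iff, Set.mem_singleton_iff] at this ⊢
      omega
    · have : nicfDigit x (i + 1) ∈ _ := round_mem_of_neg_five_lt_of_lt_neg_two h5i.1 h
      simp only [Set.mem_insert_iff, Set.mem_singleton_iff] at this ⊢
      omega
  all_goals
    have ha : (nicfDigit x (i + 1) : ℝ) = _ := congrArg (Int.cast (R := ℝ)) ha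
    push_cast at ha
    rcases hsign with h | h <;> linarith

theorem nicf_iterate_large_of_not_mem_nicf5star (x : ℝ) (hx : Irrational x)
    (h : x ∉ NICF5star) :
    x < 0 ∨ 1 < x ∨ ∃ n : ℕ, 1 ≤ n ∧ nicfMu < |nicfX x n| := by
  by_contra! hsmall
  obtain ⟨hx0, hx1, hμ⟩ := hsmall
  refine h (mem_NICF5star_of_abs_nicfX_succ_lt_five hx ⟨hx0, hx1⟩ fun n => ?_)
  exact (hμ (n + 1) n.succ_pos).trans_lt nicfMu_lt_five
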